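/- arXiv:1610.09564 — 3 statements merged into one kernel-verified Lean document; each statement's English description precedes it below -/
import Mathlib

section
/- Let D be a domain in the complex plane, let a_1, …, a_n be finitely many distinguished points of D, and let φ and ψ be complex-valued functions on D that are integrable with respect to two-dimensional Lebesgue measure, holomorphic on D \ {a_1, …, a_n}, nowhere zero on D \ {a_1, …, a_n}, and meromorphic at each a_j with order at least −1 (i.e. at worst a simple pole). For real t set h(t) = ∬_D |φ(z) + t ψ(z)| dx dy. Then h is differentiable at every real t in some neighborhood of 0, and h′(0) = Re ∬_D ψ(z) · (conj(φ(z))/|φ(z)|) dx dy. -/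
/-!
For each `z`, the map `t ↦ ‖φ z + t ψ z‖` is `‖ψ z‖`-Lipschitz and differentiable wherever
`φ z + t ψ z ≠ 0`, so differentiation under the integral sign applies at every `t` for which
`φ + t ψ` vanishes only on a null subset of `D`. The function `φ + t ψ` is meromorphic on the
domain `D`, and for small `t` it does not vanish at a fixed point `z₀ ∉ {a_j}` where `φ z₀ ≠ 0`.
By the identity principle its zeros are then discrete in `D`, hence countable, hence null.
-/

open MeasureTheory Topology Filter
open scoped RealInnerProductSpace ComplexConjugate

theorem HasDerivAt.norm {F : Type*} [NormedAddCommGroup F] [InnerProductSpace ℝ F]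
    {f : ℝ → F} {f' : F} {x : ℝ} (hf : HasDerivAt f f' x) (h0 : f x ≠ 0) :
    HasDerivAt (fun y => ‖f y‖) (⟪f x, f'⟫ / ‖f x‖) x := by
  have hsq := hf.norm_sq.sqrt (by positivity)
  simp only [Real.sqrt_sq (norm_nonneg _)] at hsq
  convert hsq using 1
  field_simp

section Integral

variable {α : Type*} [MeasurableSpace α] {μ : Measure α}

theorem hasDerivAt_integral_norm_add_smul {F : Type*} [NormedAddCommGroup F]
    [InnerProductSpace ℝ F] {f g : α → F} (hf : Integrable f μ) (hg : Integrable g μ) {t₀ : ℝ}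
    (h0 : ∀ᵐ x ∂μ, f x + t₀ • g x ≠ 0) :
    HasDerivAt (fun t : ℝ => ∫ x, ‖f x + t • g x‖ ∂μ)
      (∫ x, ⟪f x + t₀ • g x, g x⟫ / ‖f x + t₀ • g x‖ ∂μ) t₀ := by
  have hmeas (t : ℝ) : AEStronglyMeasurable (fun x => f x + t • g x) μ :=
    hf.aestronglyMeasurable.add (hg.aestronglyMeasurable.const_smul t)
  have hlip (x : α) : LipschitzWith (Real.nnabs ‖g x‖) (fun t : ℝ => ‖f x + t • g x‖) := by
    refine LipschitzWith.of_dist_le_mul fun s t => ?_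
    rw [Real.coe_nnabs, abs_norm, Real.dist_eq, Real.dist_eq, mul_comm]
    calc |‖f x + s • g x‖ - ‖f x + t • g x‖| ≤ ‖(s - t) • g x‖ := by
          simpa [sub_smul] using abs_norm_sub_norm_le (f x + s • g x) (f x + t • g x)
      _ = |s - t| * ‖g x‖ := by rw [norm_smul, Real.norm_eq_abs]
  refine (hasDerivAt_integral_of_dominated_loc_of_lip (univ_mem (f := 𝓝 t₀))
    (.of_forall fun t => (hmeas t).norm) (hf.add (hg.smul t₀)).norm ?_
    (.of_forall fun x => (hlip x).lipschitzOnWith) hg.norm ?_).2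
  · exact ((hmeas t₀).inner hg.aestronglyMeasurable).aemeasurable.div
      (hmeas t₀).norm.aemeasurable |>.aestronglyMeasurable
  · filter_upwards [h0] with x hx
    simpa using (((hasDerivAt_id t₀).smul_const (g x)).const_add (f x)).norm (by simpa using hx)

theorem MeasureTheory.Integrable.mul_conj_div_norm {f g : α → ℂ} (hg : Integrable g μ)
    (hf : AEStronglyMeasurable f μ) : Integrable (fun x => g x * conj (f x) / ‖f x‖) μ := by
  simp_rw [mul_div_assoc]
  refine hg.mul_bdd (c := 1) ?_ (.of_forall fun x => ?_)
  · exact (hf.star.aemeasurable.div (Complex.measurable_ofReal.comp_aemeasurable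
      hf.norm.aemeasurable)).aestronglyMeasurable
  · rw [norm_div, Complex.norm_conj, Complex.norm_real, norm_norm]
    exact div_self_le_one _

end Integral

theorem MeromorphicAt.of_eventuallyEq_zpow_mul {𝕜 : Type*} [NontriviallyNormedField 𝕜]
    {f g : 𝕜 → 𝕜} {x : 𝕜} {m : ℤ} (hg : AnalyticAt 𝕜 g x)
    (hf : ∀ᶠ z in 𝓝[≠] x, f z = (z - x) ^ m * g z) : MeromorphicAt f x :=
  MeromorphicAt.iff_eventuallyEq_zpow_smul_analyticAt.2 ⟨m, g, hg, hf⟩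

theorem DifferentiableOn.meromorphicOn_of_meromorphicAt {E : Type*} [NormedAddCommGroup E]
    [NormedSpace ℂ E] [CompleteSpace E] {f : ℂ → E} {U A : Set ℂ} (hU : IsOpen U)
    (hA : IsClosed A) (hf : DifferentiableOn ℂ f (U \ A)) (hfA : ∀ a ∈ A, MeromorphicAt f a) :
    MeromorphicOn f U := by
  intro z hz
  by_cases hzA : z ∈ A
  · exact hfA z hzA
  · exact (hf.analyticAt ((hU.sdiff hA).mem_nhds ⟨hz, hzA⟩)).meromorphicAt

theorem MeromorphicOn.ae_restrict_ne_zero {𝕜 E : Type*} [NontriviallyNormedField 𝕜]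
    [NormedAddCommGroup E] [NormedSpace 𝕜 E] [MeasurableSpace 𝕜] [SecondCountableTopology 𝕜]
    {μ : Measure 𝕜} [NullSingletonClass μ] {f : 𝕜 → E} {U : Set 𝕜}
    (hf : MeromorphicOn f U) (hU : IsPreconnected U) (hUm : MeasurableSet U) {x : 𝕜}
    (hx : x ∈ U) (hfx : ContinuousAt f x) (hfx₀ : f x ≠ 0) :
    ∀ᵐ z ∂μ.restrict U, f z ≠ 0 := by
  have hord : meromorphicOrderAt f x ≠ ⊤ :=
    (meromorphicOrderAt_ne_top_iff_eventually_ne_zero (hf x hx)).2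
      (eventually_nhdsWithin_of_eventually_nhds (hfx.eventually_ne hfx₀))
  exact ae_restrict_le_codiscreteWithin hUm <| hf.eventually_codiscreteWithin_apply_ne_zero
    fun y hy => hf.meromorphicOrderAt_ne_top_of_isPreconnected hU hx hy hord

theorem hasDerivAt_integral_norm_add_mul_of_meromorphicOn {D : Set ℂ} (hD : IsOpen D)
    (hD_conn : IsPreconnected D) {φ ψ : ℂ → ℂ} (hφ_int : IntegrableOn φ D)
    (hψ_int : IntegrableOn ψ D) (hφ : MeromorphicOn φ D) (hψ : MeromorphicOn ψ D) {z₀ : ℂ}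
    (hz₀ : z₀ ∈ D) (hφ_cont : ContinuousAt φ z₀) (hψ_cont : ContinuousAt ψ z₀) {t₀ : ℝ}
    (ht₀ : φ z₀ + t₀ * ψ z₀ ≠ 0) :
    HasDerivAt (fun t : ℝ => ∫ z in D, ‖φ z + t * ψ z‖)
      (∫ z in D, ⟪φ z + t₀ * ψ z, ψ z⟫ / ‖φ z + t₀ * ψ z‖) t₀ := by
  simp_rw [← Complex.real_smul] at ht₀ ⊢
  exact hasDerivAt_integral_norm_add_smul hφ_int hψ_int <|
    (hφ.add (hψ.const_smul t₀)).ae_restrict_ne_zero hD_conn hD.measurableSet hz₀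
      (hφ_cont.add (hψ_cont.const_smul t₀)) ht₀

theorem stmt0_general
    (D : Set ℂ) (hD_open : IsOpen D) (hD_conn : IsConnected D)
    (n : ℕ) (a : Fin n → ℂ)
    (φ ψ : ℂ → ℂ)
    (hφ_int : IntegrableOn φ D) (hψ_int : IntegrableOn ψ D)
    (hφ_hol : DifferentiableOn ℂ φ (D \ Set.range a))
    (hψ_hol : DifferentiableOn ℂ ψ (D \ Set.range a))
    (hφ_ne : ∀ z ∈ D \ Set.range a, φ z ≠ 0)
    (hφ_mer : ∀ j : Fin n, ∃ (m : ℤ) (g : ℂ → ℂ), -1 ≤ m ∧ AnalyticAt ℂ g (a j) ∧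
      g (a j) ≠ 0 ∧ ∀ᶠ z in 𝓝[≠] (a j), φ z = (z - a j) ^ m * g z)
    (hψ_mer : ∀ j : Fin n, ∃ (m : ℤ) (g : ℂ → ℂ), -1 ≤ m ∧ AnalyticAt ℂ g (a j) ∧
      g (a j) ≠ 0 ∧ ∀ᶠ z in 𝓝[≠] (a j), ψ z = (z - a j) ^ m * g z)
    (h : ℝ → ℝ) (hh : ∀ t : ℝ, h t = ∫ z in D, ‖φ z + (t : ℂ) * ψ z‖) :
    ∃ ε > (0 : ℝ), (∀ t : ℝ, |t| < ε → DifferentiableAt ℝ h t) ∧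
      HasDerivAt h
        ((∫ z in D, ψ z * (starRingEnd ℂ) (φ z) / ((‖φ z‖ : ℝ) : ℂ)).re) 0 := by
  obtain rfl : h = fun t : ℝ => ∫ z in D, ‖φ z + t * ψ z‖ := funext hh
  have hA : IsClosed (Set.range a) := (Set.finite_range a).isClosed
  have hmer {f : ℂ → ℂ} (hf_hol : DifferentiableOn ℂ f (D \ Set.range a))
      (hf_mer : ∀ j : Fin n, ∃ (m : ℤ) (g : ℂ → ℂ), -1 ≤ m ∧ AnalyticAt ℂ g (a j) ∧
        g (a j) ≠ 0 ∧ ∀ᶠ z in 𝓝[≠] (a j), f z = (z - a j) ^ m * g z) :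
      MeromorphicOn f D := by
    refine hf_hol.meromorphicOn_of_meromorphicAt hD_open hA ?_
    rintro _ ⟨j, rfl⟩
    obtain ⟨m, g, -, hg, -, hfg⟩ := hf_mer j
    exact .of_eventuallyEq_zpow_mul hg hfg
  obtain ⟨z₀, hz₀⟩ : (D \ Set.range a).Nonempty :=
    ((Set.finite_range a).countable.dense_compl ℝ).inter_open_nonempty D hD_open hD_conn.nonempty
  have hz₀_nhds : D \ Set.range a ∈ 𝓝 z₀ := (hD_open.sdiff hA).mem_nhds hz₀
  have hderiv (t : ℝ) (ht : φ z₀ + t * ψ z₀ ≠ 0) := hasDerivAt_integral_norm_add_mul_of_meromorphicOn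
    hD_open hD_conn.isPreconnected hφ_int hψ_int (hmer hφ_hol hφ_mer) (hmer hψ_hol hψ_mer) hz₀.1
    (hφ_hol.continuousOn.continuousAt hz₀_nhds) (hψ_hol.continuousOn.continuousAt hz₀_nhds) ht
  have h0 : φ z₀ + (0 : ℝ) * ψ z₀ ≠ 0 := by simpa using hφ_ne z₀ hz₀
  have hcont : Continuous fun t : ℝ => φ z₀ + t * ψ z₀ := by fun_prop
  obtain ⟨ε, hε, hgood⟩ := Metric.eventually_nhds_iff.1 (hcont.continuousAt.eventually_ne h0)
  refine ⟨ε, hε, fun t ht => (hderiv t (hgood (by simpa using ht))).differentiableAt, ?_⟩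
  convert hderiv 0 h0 using 1
  rw [← RCLike.re_to_complex, ← integral_re (hψ_int.mul_conj_div_norm hφ_int.aestronglyMeasurable)]
  simp [Complex.inner, Complex.div_ofReal_re]

/-- Lemma on differentiability of `h(t) = ∬_D |φ + tψ|`.
`D ⊆ ℂ` is a domain, `a 0, …, a (n-1)` are distinguished points of `D`,
`φ, ψ` are integrable on `D`, holomorphic and nowhere zero on `D \ {a j}`,
and meromorphic at each `a j` with order at least `-1` (at worst a simple pole).
Then `h(t) = ∬_D |φ(z) + t ψ(z)| dx dy` is differentiable near `t = 0` and
`h′(0) = Re ∬_D ψ(z) (conj φ(z) / |φ(z)|) dx dy`. -/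
theorem stmt0
    (D : Set ℂ) (hD_open : IsOpen D) (hD_conn : IsConnected D)
    (n : ℕ) (a : Fin n → ℂ) (ha : ∀ j, a j ∈ D)
    (φ ψ : ℂ → ℂ)
    (hφ_int : IntegrableOn φ D) (hψ_int : IntegrableOn ψ D)
    (hφ_hol : DifferentiableOn ℂ φ (D \ Set.range a))
    (hψ_hol : DifferentiableOn ℂ ψ (D \ Set.range a))
    (hφ_ne : ∀ z ∈ D \ Set.range a, φ z ≠ 0)
    (hψ_ne : ∀ z ∈ D \ Set.range a, ψ z ≠ 0)
    (hφ_mer : ∀ j : Fin n, ∃ (m : ℤ) (g : ℂ → ℂ), -1 ≤ m ∧ AnalyticAt ℂ g (a j) ∧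
      g (a j) ≠ 0 ∧ ∀ᶠ z in 𝓝[≠] (a j), φ z = (z - a j) ^ m * g z)
    (hψ_mer : ∀ j : Fin n, ∃ (m : ℤ) (g : ℂ → ℂ), -1 ≤ m ∧ AnalyticAt ℂ g (a j) ∧
      g (a j) ≠ 0 ∧ ∀ᶠ z in 𝓝[≠] (a j), ψ z = (z - a j) ^ m * g z)
    (h : ℝ → ℝ) (hh : ∀ t : ℝ, h t = ∫ z in D, ‖φ z + (t : ℂ) * ψ z‖) :
    ∃ ε > (0 : ℝ), (∀ t : ℝ, |t| < ε → DifferentiableAt ℝ h t) ∧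
      HasDerivAt h
        ((∫ z in D, ψ z * (starRingEnd ℂ) (φ z) / ((‖φ z‖ : ℝ) : ℂ)).re) 0 :=
  stmt0_general D hD_open hD_conn n a φ ψ hφ_int hψ_int hφ_hol hψ_hol hφ_ne hφ_mer hψ_mer h hh
end

section
/- Let V be a complex Banach space whose norm is differentiable away from the origin in the following sense: for every v ∈ V with v ≠ 0 and every w ∈ V the limit A(v, w) = lim_{t→0, t real} (‖v + t w‖ − ‖v‖)/t exists, and for every fixed v ≠ 0 the map w ↦ A(v, w) is a bounded real-linear functional on V. Let W be a nontrivial closed complex subspace of V and let W′ = { w ∈ V : A(v, w) = 0 for all v ∈ W with v ≠ 0 }, a closed subspace of V. Then there exists a projection of norm 1 from V onto W (a continuous linear map P : V → V with P ∘ P = P, range of P equal to W, and operator norm ‖P‖ = 1) if and only if W′ is a complementary subspace to W, i.e. W ∩ W′ = {0} and every element of V is the sum of an element of W and an element of W′. -/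
/-!
If `P` is a projection of norm one onto `W` and `v ∈ W`, then
`‖v‖ = ‖P (v + t (x - P x))‖ ≤ ‖v + t (x - P x)‖` for all real `t`, so `t ↦ ‖v + t (x - P x)‖` is
minimal at `0` and its derivative `A(v, x - P x)` vanishes: `x - P x ∈ W′`. Conversely,
`A(v, v) = ‖v‖` forces `W ∩ W′ = {0}`, and convexity of the norm gives
`A(v, w′) ≤ ‖v + w′‖ - ‖v‖`, so `‖v‖ ≤ ‖v + w′‖` for `v ∈ W`, `w′ ∈ W′`: the projection along `W′`
is bounded by one, hence continuous of norm one.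
-/

open Topology Filter

section NormDirDeriv

variable {V : Type*} [NormedAddCommGroup V] [NormedSpace ℝ V]

def HasNormDirDeriv (v w : V) (a : ℝ) : Prop :=
  Tendsto (fun t : ℝ => (‖v + t • w‖ - ‖v‖) / t) (𝓝[≠] 0) (𝓝 a)

namespace HasNormDirDeriv

variable {v w : V} {a : ℝ}

theorem eq_norm_of_self (h : HasNormDirDeriv v v a) : a = ‖v‖ := by
  refine tendsto_nhds_unique h (tendsto_const_nhds.congr' ?_)
  have hgt : Set.Ioi (-1 : ℝ) ∈ 𝓝[≠] 0 := nhdsWithin_le_nhds (Ioi_mem_nhds (by norm_num))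
  filter_upwards [hgt, self_mem_nhdsWithin] with t (ht : -1 < t) (ht0 : t ≠ 0)
  have hv : v + t • v = (1 + t) • v := by rw [add_smul, one_smul]
  rw [hv, norm_smul, Real.norm_of_nonneg (by linarith)]
  field_simp
  ring

theorem smul {𝕜 : Type*} [NormedField 𝕜] [NormedSpace 𝕜 V] [SMulCommClass ℝ 𝕜 V]
    (h : HasNormDirDeriv v w a) (c : 𝕜) : HasNormDirDeriv (c • v) (c • w) (‖c‖ * a) := by
  refine (h.const_mul ‖c‖).congr fun t => ?_
  rw [smul_comm t c w, ← smul_add, norm_smul, norm_smul]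
  ring

theorem eq_zero_of_forall_norm_le (h : HasNormDirDeriv v w a)
    (hmin : ∀ t : ℝ, ‖v‖ ≤ ‖v + t • w‖) : a = 0 := by
  have hq : ∀ t : ℝ, 0 ≤ ‖v + t • w‖ - ‖v‖ := fun t => sub_nonneg.2 (hmin t)
  apply le_antisymm
  · refine le_of_tendsto (h.mono_left (nhdsLT_le_nhdsNE 0)) ?_
    filter_upwards [self_mem_nhdsWithin] with t (ht : t < 0)
    exact div_nonpos_of_nonneg_of_nonpos (hq t) ht.le
  · refine ge_of_tendsto (h.mono_left (nhdsGT_le_nhdsNE 0)) ?_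
    filter_upwards [self_mem_nhdsWithin] with t (ht : 0 < t)
    exact div_nonneg (hq t) ht.le

theorem le_norm_add_sub_norm (h : HasNormDirDeriv v w a) : a ≤ ‖v + w‖ - ‖v‖ := by
  refine le_of_tendsto (h.mono_left (nhdsGT_le_nhdsNE 0)) ?_
  filter_upwards [Ioc_mem_nhdsGT_of_mem ⟨le_rfl, one_pos⟩] with t ⟨ht0, ht1⟩
  have hconv : ‖v + t • w‖ ≤ (1 - t) * ‖v‖ + t * ‖v + w‖ :=
    calc ‖v + t • w‖ = ‖(1 - t) • v + t • (v + w)‖ := by congr 1; module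
      _ ≤ ‖(1 - t) • v‖ + ‖t • (v + w)‖ := norm_add_le _ _
      _ = (1 - t) * ‖v‖ + t * ‖v + w‖ := by
        rw [norm_smul, norm_smul, Real.norm_of_nonneg (by linarith), Real.norm_of_nonneg ht0.le]
  rw [div_le_iff₀ ht0]
  linarith

end HasNormDirDeriv

end NormDirDeriv

theorem Submodule.isCompl_iff_inter_eq_and_forall_exists_add {R M : Type*} [Ring R]
    [AddCommGroup M] [Module R M] {p q : Submodule R M} :
    IsCompl p q ↔
      (p : Set M) ∩ q = {0} ∧ ∀ x, ∃ y ∈ (p : Set M), ∃ z ∈ (q : Set M), x = y + z := by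
  rw [isCompl_iff, disjoint_iff, codisjoint_iff_exists_add_eq, ← SetLike.coe_set_eq,
    Submodule.coe_inf, Submodule.bot_coe]
  refine and_congr Iff.rfl (forall_congr' fun x => ?_)
  simp only [SetLike.mem_coe, eq_comm (a := x)]
  exact ⟨fun ⟨y, z, hy, hz, h⟩ => ⟨y, hy, z, hz, h⟩, fun ⟨y, hy, z, hz, h⟩ => ⟨y, z, hy, hz, h⟩⟩

section Projection

variable {𝕜 V : Type*} [NontriviallyNormedField 𝕜] [NormedAddCommGroup V] [NormedSpace 𝕜 V]

theorem exists_projection_norm_eq_one_of_isCompl {W W' : Submodule 𝕜 V} (hc : IsCompl W W')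
    (hW : W ≠ ⊥) (hle : ∀ w ∈ W, ∀ w' ∈ W', ‖w‖ ≤ ‖w + w'‖) :
    ∃ P : V →L[𝕜] V, (∀ x, P (P x) = P x) ∧ Set.range P = W ∧ ‖P‖ = 1 := by
  set p := W.projection W' hc
  have hp_le : ∀ x, ‖p x‖ ≤ 1 * ‖x‖ := fun x => by
    simpa [W.projection_add_projection_eq_self hc x] using
      hle _ (W.projection_apply_mem hc x) _ (W'.projection_apply_mem hc.symm x)
  have hp_left : ∀ w ∈ W, p w = w := fun w hw => W.projection_apply_of_mem_left hc hw
  set P := p.mkContinuous 1 hp_le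
  obtain ⟨v, hv, hv0⟩ := Submodule.exists_mem_ne_zero_of_ne_bot hW
  refine ⟨P, fun x => hp_left _ (W.projection_apply_mem hc x), ?_, ?_⟩
  · have := congrArg ((↑) : Submodule 𝕜 V → Set V) (W.range_projection hc)
    rwa [LinearMap.coe_range] at this
  · refine le_antisymm (LinearMap.mkContinuous_norm_le _ zero_le_one hp_le) ?_
    have : ‖v‖ ≤ ‖P‖ * ‖v‖ := by
      simpa [P, hp_left v hv] using P.le_opNorm v
    exact le_of_mul_le_mul_right (by rwa [one_mul]) (norm_pos_iff.2 hv0)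

end Projection

section NormOrthogonal

variable {𝕜 V : Type*} [NormedField 𝕜] [NormedAddCommGroup V] [NormedSpace 𝕜 V]
  [NormedSpace ℝ V] [SMulCommClass ℝ 𝕜 V] {A : V → V → ℝ}
  (hA : ∀ v, v ≠ 0 → ∀ w, HasNormDirDeriv v w (A v w))
  (hlin : ∀ v, v ≠ 0 → IsLinearMap ℝ (A v))

def Submodule.normOrthogonal (W : Submodule 𝕜 V) : Submodule 𝕜 V where
  carrier := {w | ∀ v ∈ W, v ≠ 0 → A v w = 0}
  zero_mem' := fun v _ hv => (hlin v hv).map_zero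
  add_mem' := fun {a b} ha hb v hvW hv => by
    rw [(hlin v hv).map_add, ha v hvW hv, hb v hvW hv, add_zero]
  smul_mem' := fun c w hw v hvW hv => by
    rcases eq_or_ne c 0 with rfl | hc
    · rw [zero_smul]
      exact (hlin v hv).map_zero
    · have hv' : c⁻¹ • v ≠ 0 := smul_ne_zero (inv_ne_zero hc) hv
      -- `v = c • (c⁻¹ • v)` and `A (c • u) (c • w) = ‖c‖ * A u w`
      have hscale := tendsto_nhds_unique (hA v hv (c • w))
        (smul_inv_smul₀ hc v ▸ (hA _ hv' w).smul c)
      rw [hscale, hw _ (W.smul_mem _ hvW) hv', mul_zero]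

variable {W : Submodule 𝕜 V}

theorem Submodule.disjoint_normOrthogonal : Disjoint W (W.normOrthogonal hA hlin) := by
  refine Submodule.disjoint_def.2 fun v hvW hv' => by_contra fun hv => ?_
  have hAvv : A v v = ‖v‖ := (hA v hv v).eq_norm_of_self
  exact hv (norm_eq_zero.1 (hAvv ▸ hv' v hvW hv))

theorem Submodule.norm_le_norm_add_of_mem_normOrthogonal {v w : V} (hv : v ∈ W)
    (hw : w ∈ W.normOrthogonal hA hlin) : ‖v‖ ≤ ‖v + w‖ := by
  rcases eq_or_ne v 0 with rfl | hv0
  · simp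
  · linarith [hw v hv hv0 ▸ (hA v hv0 w).le_norm_add_sub_norm]

theorem Submodule.isCompl_normOrthogonal_of_projection (P : V →ₗ[ℝ] V) (hPP : ∀ x, P (P x) = P x)
    (hrange : Set.range P = W) (hP : ∀ x, ‖P x‖ ≤ ‖x‖) :
    IsCompl W (W.normOrthogonal hA hlin) := by
  have hPW : ∀ x, P x ∈ W := fun x => show P x ∈ (W : Set V) from hrange ▸ Set.mem_range_self x
  refine ⟨W.disjoint_normOrthogonal hA hlin, Submodule.codisjoint_iff_exists_add_eq.2 fun x =>
    ⟨P x, x - P x, hPW x, fun v hvW hv => ?_, add_sub_cancel _ _⟩⟩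
  obtain ⟨y, rfl⟩ : v ∈ Set.range P := hrange ▸ hvW
  refine (hA _ hv _).eq_zero_of_forall_norm_le fun t => ?_
  calc ‖P y‖ = ‖P (P y + t • (x - P x))‖ := by
        rw [map_add, hPP, map_smul, map_sub, hPP, sub_self, smul_zero, add_zero]
    _ ≤ ‖P y + t • (x - P x)‖ := hP _

end NormOrthogonal

theorem stmt3_general
    (V : Type*) [NormedAddCommGroup V] [NormedSpace ℂ V]
    (A : V → V → ℝ)
    (hA_lim : ∀ v : V, v ≠ 0 → ∀ w : V,
      Tendsto (fun t : ℝ => (‖v + t • w‖ - ‖v‖) / t) (𝓝[≠] (0 : ℝ)) (𝓝 (A v w)))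
    (hA_lin : ∀ v : V, v ≠ 0 → IsBoundedLinearMap ℝ (A v))
    (W : Submodule ℂ V) (hW_ne : W ≠ ⊥) :
    (∃ P : V →L[ℂ] V, (∀ x, P (P x) = P x) ∧ Set.range P = (W : Set V) ∧ ‖P‖ = 1) ↔
      ((W : Set V) ∩ {w : V | ∀ v ∈ W, v ≠ 0 → A v w = 0} = {0} ∧
        ∀ x : V, ∃ w ∈ (W : Set V), ∃ w' ∈ {w : V | ∀ v ∈ W, v ≠ 0 → A v w = 0},
          x = w + w') := by
  have hlin : ∀ v, v ≠ 0 → IsLinearMap ℝ (A v) := fun v hv => (hA_lin v hv).toIsLinearMap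
  refine Iff.trans ?_
    (Submodule.isCompl_iff_inter_eq_and_forall_exists_add (q := W.normOrthogonal hA_lim hlin))
  exact ⟨fun ⟨P, hPP, hrange, hP⟩ => W.isCompl_normOrthogonal_of_projection hA_lim hlin
      (P.restrictScalars ℝ) hPP hrange fun x => by simpa [hP] using P.le_opNorm x,
    fun hc => exists_projection_norm_eq_one_of_isCompl hc hW_ne fun _ hv _ hw =>
      W.norm_le_norm_add_of_mem_normOrthogonal hA_lim hlin hv hw⟩

/-- Earle–Kra; existence criterion for a norm-one projection.
`V` is a complex Banach space whose norm is differentiable away from `0`: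
for each `v ≠ 0` and `w`, `A v w = lim_{t→0, t∈ℝ} (‖v + t w‖ − ‖v‖)/t` exists and
`w ↦ A v w` is a bounded real-linear functional.  For a nontrivial closed complex
subspace `W` and `W′ = {w | A v w = 0 for all v ∈ W \ {0}}`, there is a projection
of norm one from `V` onto `W` iff `W ∩ W′ = {0}` and `W + W′ = V`. -/
theorem stmt3
    (V : Type*) [NormedAddCommGroup V] [NormedSpace ℂ V] [CompleteSpace V]
    (A : V → V → ℝ)
    (hA_lim : ∀ v : V, v ≠ 0 → ∀ w : V,
      Tendsto (fun t : ℝ => (‖v + t • w‖ - ‖v‖) / t) (𝓝[≠] (0 : ℝ)) (𝓝 (A v w)))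
    (hA_lin : ∀ v : V, v ≠ 0 → IsBoundedLinearMap ℝ (A v))
    (W : Submodule ℂ V) (hW_closed : IsClosed (W : Set V)) (hW_ne : W ≠ ⊥) :
    (∃ P : V →L[ℂ] V, (∀ x, P (P x) = P x) ∧ Set.range P = (W : Set V) ∧ ‖P‖ = 1) ↔
      ((W : Set V) ∩ {w : V | ∀ v ∈ W, v ≠ 0 → A v w = 0} = {0} ∧
        ∀ x : V, ∃ w ∈ (W : Set V), ∃ w' ∈ {w : V | ∀ v ∈ W, v ≠ 0 → A v w = 0},
          x = w + w') :=
  stmt3_general V A hA_lim hA_lin W hW_ne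
end

section
/- Let V be a complex Banach space whose norm is differentiable away from the origin in the following sense: for every v ∈ V with v ≠ 0 and every w ∈ V the limit A(v, w) = lim_{t→0, t real} (‖v + t w‖ − ‖v‖)/t exists, and for every fixed v ≠ 0 the map w ↦ A(v, w) is a bounded real-linear functional on V. Let W be a nontrivial closed complex subspace of V and let W′ = { w ∈ V : A(v, w) = 0 for all v ∈ W with v ≠ 0 }. If P is a projection of norm 1 from V onto W, then P is the unique projection of norm 1 from V onto W, and the kernel of P equals W′. -/
open Topology Filter

/-- Earle–Kra; uniqueness and kernel of a norm-one projection.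
`V` is a complex Banach space whose norm is differentiable away from `0`:
for each `v ≠ 0` and `w`, `A v w = lim_{t→0, t∈ℝ} (‖v + t w‖ − ‖v‖)/t` exists and
`w ↦ A v w` is a bounded real-linear functional.  If `P` is a projection of norm one
from `V` onto a nontrivial closed complex subspace `W`, then `P` is the unique such
projection and its kernel equals `W′ = {w | A v w = 0 for all v ∈ W \ {0}}`. -/
theorem stmt4
    (V : Type*) [NormedAddCommGroup V] [NormedSpace ℂ V] [CompleteSpace V]
    (A : V → V → ℝ)
    (hA_lim : ∀ v : V, v ≠ 0 → ∀ w : V,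
      Tendsto (fun t : ℝ => (‖v + t • w‖ - ‖v‖) / t) (𝓝[≠] (0 : ℝ)) (𝓝 (A v w)))
    (hA_lin : ∀ v : V, v ≠ 0 → IsBoundedLinearMap ℝ (A v))
    (W : Submodule ℂ V) (hW_closed : IsClosed (W : Set V)) (hW_ne : W ≠ ⊥)
    (P : V →L[ℂ] V) (hP_proj : ∀ x, P (P x) = P x)
    (hP_range : Set.range P = (W : Set V)) (hP_norm : ‖P‖ = 1) :
    (∀ Q : V →L[ℂ] V, (∀ x, Q (Q x) = Q x) → Set.range Q = (W : Set V) → ‖Q‖ = 1 →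
      Q = P) ∧
    {x : V | P x = 0} = {w : V | ∀ v ∈ W, v ≠ 0 → A v w = 0} := by
  -- `A v v = ‖v‖` for `v ≠ 0`.
  have hAvv : ∀ v : V, v ≠ 0 → A v v = ‖v‖ := by
    intro v hv
    have h1 := hA_lim v hv v
    have hev : ∀ᶠ t in 𝓝[≠] (0 : ℝ), (‖v + t • v‖ - ‖v‖) / t = ‖v‖ := by
      have h3 : Set.Ioo (-1 : ℝ) 1 ∈ 𝓝 (0 : ℝ) := Ioo_mem_nhds (by norm_num) (by norm_num)
      filter_upwards [mem_nhdsWithin_of_mem_nhds h3, self_mem_nhdsWithin] with t ht hne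
      have htne : t ≠ 0 := hne
      have h4 : v + t • v = (1 + t) • v := by rw [add_smul, one_smul]
      have h5 : ‖v + t • v‖ = (1 + t) * ‖v‖ := by
        rw [h4, norm_smul, Real.norm_eq_abs, abs_of_pos (by linarith [ht.1])]
      rw [h5]
      field_simp
      ring
    have h2 : Tendsto (fun t : ℝ => (‖v + t • v‖ - ‖v‖) / t) (𝓝[≠] (0 : ℝ)) (𝓝 ‖v‖) :=
      tendsto_const_nhds.congr' (hev.mono fun t ht => ht.symm)
    exact tendsto_nhds_unique h1 h2
  -- Main lemma: any norm-one projection `Q` onto `W` satisfies `A v (Q x) = A v x`.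
  have main : ∀ Q : V →L[ℂ] V, (∀ x, Q (Q x) = Q x) → Set.range Q = (W : Set V) → ‖Q‖ = 1 →
      ∀ v ∈ W, v ≠ 0 → ∀ x, A v (Q x) = A v x := by
    intro Q hQp hQr hQn
    have hQv : ∀ v ∈ W, Q v = v := by
      intro v hv
      have hv' : v ∈ Set.range Q := by rw [hQr]; exact hv
      obtain ⟨y, rfl⟩ := hv'
      exact hQp y
    have hle : ∀ v ∈ W, v ≠ 0 → ∀ x, A v (Q x) ≤ A v x := by
      intro v hvW hv x
      have key : ∀ t : ℝ, ‖v + t • Q x‖ ≤ ‖v + t • x‖ := by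
        intro t
        have h1 : v + t • Q x = Q (v + t • x) := by
          rw [map_add, Q.map_smul_of_tower, hQv v hvW]
        rw [h1]
        calc ‖Q (v + t • x)‖ ≤ ‖Q‖ * ‖v + t • x‖ := Q.le_opNorm _
          _ = ‖v + t • x‖ := by rw [hQn, one_mul]
      have hsub : 𝓝[>] (0 : ℝ) ≤ 𝓝[≠] (0 : ℝ) :=
        nhdsWithin_mono _ fun t ht => ne_of_gt ht
      have t1 : Tendsto (fun t : ℝ => (‖v + t • Q x‖ - ‖v‖) / t) (𝓝[>] (0 : ℝ))
          (𝓝 (A v (Q x))) := (hA_lim v hv (Q x)).mono_left hsub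
      have t2 : Tendsto (fun t : ℝ => (‖v + t • x‖ - ‖v‖) / t) (𝓝[>] (0 : ℝ))
          (𝓝 (A v x)) := (hA_lim v hv x).mono_left hsub
      refine le_of_tendsto_of_tendsto t1 t2 ?_
      filter_upwards [self_mem_nhdsWithin] with t ht
      have ht' : (0 : ℝ) < t := ht
      exact (div_le_div_iff_of_pos_right ht').mpr (by linarith [key t])
    intro v hvW hv x
    refine le_antisymm (hle v hvW hv x) ?_
    have h1 := hle v hvW hv (-x)
    have hlin := (hA_lin v hv).toIsLinearMap
    have h2 : Q (-x) = -(Q x) := map_neg Q x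
    rw [h2, hlin.map_neg, hlin.map_neg] at h1
    linarith
  have hAP := main P hP_proj hP_range hP_norm
  have hPW : ∀ x, P x ∈ W := by
    intro x
    have : P x ∈ Set.range P := Set.mem_range_self x
    rwa [hP_range] at this
  constructor
  · intro Q hQp hQr hQn
    ext x
    by_contra hne
    set u := Q x - P x with hu
    have huW : u ∈ W := by
      have h1 : Q x ∈ W := by
        have : Q x ∈ Set.range Q := Set.mem_range_self x
        rwa [hQr] at this
      exact W.sub_mem h1 (hPW x)
    have hune : u ≠ 0 := sub_ne_zero.mpr hne
    have hlin := (hA_lin u hune).toIsLinearMap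
    have h3 : A u u = 0 := by
      have hq := main Q hQp hQr hQn u huW hune x
      have hp := hAP u huW hune x
      have : A u (Q x - P x) = A u (Q x) - A u (P x) := hlin.map_sub _ _
      rw [← hu] at this
      rw [this, hq, hp, sub_self]
    rw [hAvv u hune] at h3
    exact hune (norm_eq_zero.mp h3)
  · ext x
    simp only [Set.mem_setOf_eq]
    constructor
    · intro hx v hvW hv
      have h1 := hAP v hvW hv x
      rw [hx] at h1
      have h0 : A v 0 = 0 := (hA_lin v hv).toIsLinearMap.map_zero
      rw [← h1, h0]
    · intro hx
      by_contra hPx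
      have h1 := hAP (P x) (hPW x) hPx x
      rw [hx (P x) (hPW x) hPx] at h1
      rw [hAvv (P x) hPx] at h1
      exact hPx (norm_eq_zero.mp h1)
end
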